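/- In the ring of polynomials over ℝ in countably many indeterminates x_1, x_2, …, define the Kailath–Segall polynomials by P_0 = 1 and, for i ≥ 1, P_i = (1/i) ∑_{k=1}^{i} (−1)^{k+1} P_{i−k} x_k. Then for every i ≥ 1, i! · P_i = ∑_{λ = (1^{r_1},2^{r_2},…) ⊢ i} d_λ ∏_{j≥1} ((−1)^{j−1}(j−1)!\, x_j)^{r_j}; that is, i!P_i equals the i-th complete Bell polynomial evaluated at the variables ((−1)^{j−1}(j−1)! x_j)_{j≥1}. -/

import Mathlib

open Finset MvPolynomial

/-! Removing the block that contains a fixed element from a set partition of an `(n+1)`-set gives the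
recurrence `B_{n+1} = ∑_a (n choose a-1) b_a B_{n+1-a}` for the complete Bell polynomials. With
`b_a = (-1)^{a-1} (a-1)! x_a` this is the Kailath–Segall recurrence multiplied by `(n+1)!`, so
both sides of the theorem solve the same recurrence. The coefficients `d_λ` are Mathlib's
`Multiset.bell`, for which the block-removal identity is `Nat.bell_eq_sum_erase`. -/

/-- `dcoef λ = i! / ((1!)^{r_1}(2!)^{r_2}⋯ r_1! r_2! ⋯)`, the number of set partitions of an
`i`-element set whose block sizes are the parts of the integer partition `λ`. -/
noncomputable def dcoef {i : ℕ} (lam : Nat.Partition i) : ℝ :=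
  (Nat.factorial i : ℝ) /
    ((lam.parts.map fun p => (Nat.factorial p : ℝ)).prod *
     ∏ j ∈ lam.parts.toFinset, (Nat.factorial (lam.parts.count j) : ℝ))

theorem dcoef_eq_bell {i : ℕ} (lam : Nat.Partition i) : dcoef lam = lam.parts.bell := by
  have hbell := congrArg (Nat.cast : ℕ → ℝ) lam.parts.bell_mul_eq
  rw [Finset.erase_eq_of_notMem (fun h => (lam.parts_pos (Multiset.mem_toFinset.mp h)).false),
    lam.parts_sum] at hbell
  push_cast [Nat.cast_multiset_prod, Multiset.map_map, Function.comp_def] at hbell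
  have hne : ((lam.parts.map fun p => (p.factorial : ℝ)).prod *
      ∏ j ∈ lam.parts.toFinset, ((lam.parts.count j).factorial : ℝ)) ≠ 0 :=
    right_ne_zero_of_mul (by rw [← mul_assoc, hbell]; positivity)
  rw [dcoef, ← hbell, mul_assoc, mul_div_cancel_right₀ _ hne]

section CompleteBell

variable {R : Type*} [CommSemiring R] (b : ℕ → R)

def completeBell (n : ℕ) : R :=
  ∑ p : n.Partition, p.parts.bell • (p.parts.map b).prod

theorem completeBell_zero : completeBell b 0 = 1 := by
  simp [completeBell]

theorem Nat.Partition.sum_filter_mem_parts {M : Type*} [AddCommMonoid M] {n a : ℕ} (ha1 : 1 ≤ a)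
    (ha : a ≤ n) (f : n.Partition → M) :
    ∑ p ∈ univ.filter (fun p : Nat.Partition _ => a ∈ p.parts), f p = ∑ q : (n - a).Partition,
      f ((Nat.Partition.partitionWithPartEquiv ha1 ha).symm q) := by
  rw [Finset.sum_subtype _ (p := (a ∈ ·.parts)) (fun p => by simp)]
  exact Fintype.sum_equiv (Nat.Partition.partitionWithPartEquiv ha1 ha) _ _ (fun p => by simp)

theorem completeBell_succ (n : ℕ) :
    completeBell b (n + 1) =
      ∑ a ∈ Icc 1 (n + 1), n.choose (a - 1) • (b a * completeBell b (n + 1 - a)) := by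
  calc completeBell b (n + 1)
      = ∑ p : (n + 1).Partition, ∑ a ∈ p.parts.toFinset,
          (n.choose (a - 1) * (p.parts.erase a).bell) • (p.parts.map b).prod := by
        simp only [completeBell, Nat.bell_eq_sum_erase, Finset.sum_smul]
    _ = ∑ a ∈ Icc 1 (n + 1), ∑ p ∈ univ.filter (fun p : Nat.Partition _ => a ∈ p.parts),
          (n.choose (a - 1) * (p.parts.erase a).bell) • (p.parts.map b).prod := by
        refine Finset.sum_comm' fun p a => ?_
        simp only [mem_univ, Multiset.mem_toFinset, true_and, mem_filter, mem_Icc]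
        exact ⟨fun h => ⟨h, p.parts_pos h, Nat.Partition.le_of_mem_parts h⟩, fun h => h.1⟩
    _ = _ := by
        refine Finset.sum_congr rfl fun a ha => ?_
        obtain ⟨ha1, ha⟩ := Finset.mem_Icc.mp ha
        rw [Nat.Partition.sum_filter_mem_parts ha1 ha, completeBell, Finset.mul_sum, Finset.smul_sum]
        refine Finset.sum_congr rfl fun q _ => ?_
        simp only [Nat.Partition.partitionWithPartEquiv_symm_apply_parts, Multiset.erase_cons_head,
          Multiset.map_cons, Multiset.prod_cons, mul_smul, mul_smul_comm]

theorem eq_completeBell_of_recurrence (Q : ℕ → R) (h0 : Q 0 = 1)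
    (hsucc : ∀ n, Q (n + 1) = ∑ a ∈ Icc 1 (n + 1), n.choose (a - 1) • (b a * Q (n + 1 - a)))
    (n : ℕ) : Q n = completeBell b n := by
  induction n using Nat.strong_induction_on with
  | _ n ih =>
    rcases n with _ | n
    · rw [h0, completeBell_zero]
    · rw [hsucc, completeBell_succ]
      refine Finset.sum_congr rfl fun a ha => ?_
      rw [ih _ (by grind)]

end CompleteBell

theorem factorial_mul_succ_of_kailathSegall {P : ℕ → MvPolynomial ℕ ℝ}
    (hP : ∀ i, 1 ≤ i → P i = C ((i : ℝ)⁻¹) *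
      ∑ k ∈ Icc 1 i, C ((-1 : ℝ) ^ (k + 1)) * P (i - k) * X k) (n : ℕ) :
    C (((n + 1).factorial : ℝ)) * P (n + 1) = ∑ a ∈ Icc 1 (n + 1), n.choose (a - 1) •
      (C ((-1 : ℝ) ^ (a - 1) * ((a - 1).factorial : ℝ)) * X a *
        (C (((n + 1 - a).factorial : ℝ)) * P (n + 1 - a))) := by
  rw [hP (n + 1) n.succ_pos, ← mul_assoc, ← map_mul, Finset.mul_sum]
  refine Finset.sum_congr rfl fun a ha => ?_
  obtain ⟨ha1, ha⟩ := Finset.mem_Icc.mp ha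
  have hcoeff : ((n + 1).factorial : ℝ) * ((n + 1 : ℕ) : ℝ)⁻¹ * (-1) ^ (a + 1) =
      n.choose (a - 1) * ((-1) ^ (a - 1) * (a - 1).factorial) * (n + 1 - a).factorial := by
    rw [← div_eq_mul_inv, Nat.factorial_succ, Nat.cast_mul, mul_div_cancel_left₀ _ (by positivity),
      ← Nat.choose_mul_factorial_mul_factorial (show a - 1 ≤ n by omega),
      show n - (a - 1) = n + 1 - a by omega, show a + 1 = a - 1 + 2 by omega, pow_add]
    push_cast
    ring
  calc _ = C (((n + 1).factorial : ℝ) * ((n + 1 : ℕ) : ℝ)⁻¹ * (-1) ^ (a + 1)) *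
        (P (n + 1 - a) * X a) := by rw [map_mul _ _ ((-1) ^ (a + 1))]; ring
    _ = _ := by
      rw [hcoeff]
      simp only [map_mul, map_natCast, nsmul_eq_mul]
      ring

theorem kailath_segall_as_bell_general (P : ℕ → MvPolynomial ℕ ℝ) (hP0 : P 0 = 1)
    (hP : ∀ i, 1 ≤ i → P i = MvPolynomial.C ((i : ℝ)⁻¹) *
      ∑ k ∈ Finset.Icc 1 i,
        MvPolynomial.C ((-1 : ℝ) ^ (k + 1)) * P (i - k) * MvPolynomial.X k)
    (i : ℕ) :
    MvPolynomial.C ((i.factorial : ℝ)) * P i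
      = ∑ lam : Nat.Partition i, MvPolynomial.C (dcoef lam) *
          (lam.parts.map (fun j =>
            MvPolynomial.C ((-1 : ℝ) ^ (j - 1) * ((j - 1).factorial : ℝ)) *
              MvPolynomial.X j)).prod := by
  rw [eq_completeBell_of_recurrence _ (fun n => C ((n.factorial : ℝ)) * P n) (by simp [hP0])
    (factorial_mul_succ_of_kailathSegall hP) i, completeBell]
  simp only [dcoef_eq_bell, map_natCast, nsmul_eq_mul]

/-- The Kailath–Segall polynomials `P_0 = 1`,
`P_i = (1/i) ∑_{k=1}^{i} (−1)^{k+1} P_{i−k} x_k` satisfy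
`i! · P_i = ∑_{λ ⊢ i} d_λ ∏_j ((−1)^{j−1}(j−1)! x_j)^{r_j}`, i.e. `i! P_i` is the `i`-th
complete Bell polynomial in the variables `(−1)^{j−1}(j−1)! x_j`. -/
theorem kailath_segall_as_bell (P : ℕ → MvPolynomial ℕ ℝ) (hP0 : P 0 = 1)
    (hP : ∀ i, 1 ≤ i → P i = MvPolynomial.C ((i : ℝ)⁻¹) *
      ∑ k ∈ Finset.Icc 1 i,
        MvPolynomial.C ((-1 : ℝ) ^ (k + 1)) * P (i - k) * MvPolynomial.X k)
    (i : ℕ) (hi : 1 ≤ i) :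
    MvPolynomial.C ((i.factorial : ℝ)) * P i
      = ∑ lam : Nat.Partition i, MvPolynomial.C (dcoef lam) *
          (lam.parts.map (fun j =>
            MvPolynomial.C ((-1 : ℝ) ^ (j - 1) * ((j - 1).factorial : ℝ)) *
              MvPolynomial.X j)).prod :=
  kailath_segall_as_bell_general P hP0 hP i
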